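/- Let u = u₁u₂⋯u_r be a lexicographically nondecreasing product of Lyndon words. If v is a Lyndon word that occurs as a factor of u, then v is a factor of some u_i. -/

import Mathlib

/-! If a Lyndon factor `v` of `u₁ ⋯ u_r` lies in no block, it straddles the end of some block
`u_i`: `v = s t` with `s` a nonempty suffix of `u_i` and `t` nonempty. Since `v` is Lyndon, `t`
drops below `v` at some letter; that letter lies in a later block `w`, which is therefore below
a suffix `v'` of `v`, so `w < v' ≤ v`. On the other side `v < u_i`, because `s` is either `u_i`
itself or a proper suffix of the Lyndon word `u_i`. With `u_i ≤ w` this closes a cycle. -/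

/-- The lexicographic order of the paper: `u <_lex v` iff `v` is a proper prefix of `u`,
or `u = r ++ x :: s`, `v = r ++ y :: t` with letters `x < y`. -/
def PLt {X : Type*} [LinearOrder X] (u v : List X) : Prop :=
  (v <+: u ∧ v ≠ u) ∨
    ∃ (r s t : List X) (x y : X), x < y ∧ u = r ++ x :: s ∧ v = r ++ y :: t

def PLe {X : Type*} [LinearOrder X] (u v : List X) : Prop := PLt u v ∨ u = v

/-- A nonempty word is Lyndon iff `u >_lex w ++ v` for every factorization `u = v ++ w`
with `v, w` nonempty. -/
def IsLyndon {X : Type*} [LinearOrder X] (u : List X) : Prop :=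
  u ≠ [] ∧ ∀ v w : List X, u = v ++ w → v ≠ [] → w ≠ [] → PLt (w ++ v) u

section Lyndon

theorem List.exists_of_append_eq_append_cons {α : Type*} {w F r s : List α} {x : α}
    (h : w ++ F = r ++ x :: s) :
    (∃ m, w = r ++ x :: m) ∨ ∃ r', r = w ++ r' ∧ F = r' ++ x :: s := by
  rcases List.append_eq_append_iff.1 h with ⟨r', hr, hF⟩ | ⟨_ | ⟨c, m⟩, hw, hc⟩
  · exact Or.inr ⟨r', hr, hF⟩
  · exact Or.inr ⟨[], by simpa using hw.symm, by simpa using hc.symm⟩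
  · obtain ⟨rfl, -⟩ := List.cons.inj hc
    exact Or.inl ⟨m, hw⟩

variable {X : Type*} [LinearOrder X]

/-- Unlike `PLt`, this order survives appending to the smaller word. -/
def LetterLt (u v : List X) : Prop :=
  ∃ (r s t : List X) (x y : X), x < y ∧ u = r ++ x :: s ∧ v = r ++ y :: t

theorem LetterLt.plt {u v : List X} (h : LetterLt u v) : PLt u v := Or.inr h

theorem LetterLt.append_right {u v : List X} (h : LetterLt u v) (z : List X) :
    LetterLt (u ++ z) v := by
  obtain ⟨r, s, t, x, y, hxy, rfl, rfl⟩ := h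
  exact ⟨r, s ++ z, t, x, y, hxy, by simp, rfl⟩

theorem plt_append_of_ne_nil (u : List X) {t : List X} (ht : t ≠ []) : PLt (u ++ t) u :=
  Or.inl ⟨List.prefix_append u t, by simpa [eq_comm] using ht⟩

theorem not_plt_nil (v : List X) : ¬ PLt [] v := by
  rintro (⟨hpre, hne⟩ | ⟨r, s, t, x, y, -, h, -⟩)
  · exact hne (List.prefix_nil.1 hpre)
  · simp at h

theorem plt_cons_nil (a : X) (u : List X) : PLt (a :: u) [] :=
  plt_append_of_ne_nil [] (List.cons_ne_nil a u)

theorem plt_cons_cons {a b : X} {u v : List X} :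
    PLt (a :: u) (b :: v) ↔ a < b ∨ a = b ∧ PLt u v := by
  constructor
  · rintro (⟨hpre, hne⟩ | ⟨_ | ⟨c, r⟩, s, t, x, y, hxy, hu, hv⟩)
    · obtain ⟨rfl, hvu⟩ := List.cons_prefix_cons.1 hpre
      exact Or.inr ⟨rfl, Or.inl ⟨hvu, by rintro rfl; exact hne rfl⟩⟩
    · obtain ⟨rfl, -⟩ := List.cons.inj hu
      obtain ⟨rfl, -⟩ := List.cons.inj hv
      exact Or.inl hxy
    · obtain ⟨rfl, rfl⟩ := List.cons.inj hu
      obtain ⟨rfl, rfl⟩ := List.cons.inj hv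
      exact Or.inr ⟨rfl, Or.inr ⟨r, s, t, x, y, hxy, rfl, rfl⟩⟩
  · rintro (h | ⟨rfl, ⟨hpre, hne⟩ | ⟨r, s, t, x, y, hxy, rfl, rfl⟩⟩)
    · exact Or.inr ⟨[], u, v, a, b, h, rfl, rfl⟩
    · exact Or.inl ⟨List.cons_prefix_cons.2 ⟨rfl, hpre⟩, by simpa using hne⟩
    · exact Or.inr ⟨a :: r, s, t, x, y, hxy, rfl, rfl⟩

/-- The end marker `⊤` makes a proper prefix larger in the usual lexicographic order, as `PLt`
requires. -/
def endMarked (u : List X) : List (WithTop X) := u.map (↑) ++ [⊤]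

theorem plt_iff_endMarked_lt {u v : List X} : PLt u v ↔ endMarked u < endMarked v := by
  induction u generalizing v with
  | nil => cases v <;> simp [endMarked, not_plt_nil, List.cons_lt_cons_iff]
  | cons a u ih =>
    cases v <;> simp_all [endMarked, plt_cons_nil, plt_cons_cons, List.cons_lt_cons_iff]

theorem plt_irrefl (u : List X) : ¬ PLt u u :=
  fun h => lt_irrefl _ (plt_iff_endMarked_lt.1 h)

theorem plt_trans {u v w : List X} (h₁ : PLt u v) (h₂ : PLt v w) : PLt u w := by
  rw [plt_iff_endMarked_lt] at *
  exact h₁.trans h₂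

theorem plt_of_plt_of_ple {u v w : List X} (h₁ : PLt u v) (h₂ : PLe v w) : PLt u w := by
  rcases h₂ with h₂ | rfl
  exacts [plt_trans h₁ h₂, h₁]

theorem plt_of_ple_of_plt {u v w : List X} (h₁ : PLe u v) (h₂ : PLt v w) : PLt u w := by
  rcases h₁ with h₁ | rfl
  exacts [plt_trans h₁ h₂, h₂]

theorem ple_trans {u v w : List X} (h₁ : PLe u v) (h₂ : PLe v w) : PLe u w := by
  rcases h₁ with h₁ | rfl
  exacts [Or.inl (plt_of_plt_of_ple h₁ h₂), h₂]

instance : Trans (PLe (X := X)) PLe PLe := ⟨ple_trans⟩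

theorem IsLyndon.letterLt_of_eq_append {u p q : List X} (hu : IsLyndon u) (hpq : u = p ++ q)
    (hp : p ≠ []) (hq : q ≠ []) : LetterLt q u := by
  rcases hu.2 p q hpq hp hq with ⟨hpre, hne⟩ | ⟨r, s, t, x, y, hxy, hqp, hur⟩
  · exact absurd (hpre.eq_of_length (by simp [hpq, Nat.add_comm])) hne
  rcases List.exists_of_append_eq_append_cons hqp with ⟨m, hqr⟩ | ⟨z, rfl, hpz⟩
  · exact ⟨r, m, t, x, y, hxy, hqr, hur⟩
  -- `u = q ++ z ++ y :: t` and `p = z ++ x :: s`, so the rotation of `u` at `q` exceeds `u`.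
  have hrot : PLt (z ++ y :: t ++ q) u :=
    hu.2 q (z ++ y :: t) (by simp [hur]) hq (by simp)
  have hlt : PLt u (z ++ y :: t ++ q) :=
    Or.inr ⟨z, s ++ q, t ++ q, x, y, hxy, by simp [hpq, hpz], by simp⟩
  exact absurd (plt_trans hlt hrot) (plt_irrefl u)

theorem IsLyndon.ple_of_suffix {u q : List X} (hu : IsLyndon u) (hqu : q <:+ u) (hq : q ≠ []) :
    PLe q u := by
  obtain ⟨p, rfl⟩ := hqu
  rcases eq_or_ne p [] with rfl | hp
  · exact Or.inr rfl
  · exact Or.inl (hu.letterLt_of_eq_append rfl hp hq).plt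

theorem IsLyndon.plt_append_of_suffix {u q t : List X} (hu : IsLyndon u) (hqu : q <:+ u)
    (hq : q ≠ []) (ht : t ≠ []) : PLt (q ++ t) u := by
  obtain ⟨p, rfl⟩ := hqu
  rcases eq_or_ne p [] with rfl | hp
  · exact plt_append_of_ne_nil q ht
  · exact ((hu.letterLt_of_eq_append rfl hp hq).append_right t).plt

theorem LetterLt.exists_mem_of_flatten {M : List (List X)} {v : List X}
    (h : LetterLt M.flatten v) : ∃ w ∈ M, ∃ v', v' <:+ v ∧ LetterLt w v' := by
  induction M generalizing v with
  | nil =>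
    obtain ⟨r, s, t, x, y, -, h, -⟩ := h
    simp at h
  | cons w₀ M ih =>
    obtain ⟨r, s, t, x, y, hxy, hM, rfl⟩ := h
    rw [List.flatten_cons] at hM
    rcases List.exists_of_append_eq_append_cons hM with ⟨m, hw₀⟩ | ⟨r', rfl, hF⟩
    · exact ⟨w₀, List.mem_cons_self, _, List.suffix_refl _, ⟨r, m, t, x, y, hxy, hw₀, rfl⟩⟩
    · obtain ⟨w, hw, v', hv', hwv'⟩ := ih ⟨r', s, t, x, y, hxy, hF, rfl⟩
      exact ⟨w, List.mem_cons_of_mem _ hw, v', hv'.trans (by simp), hwv'⟩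

theorem IsLyndon.not_prefix_flatten {s t u : List X} {M : List (List X)}
    (hv : IsLyndon (s ++ t)) (hu : IsLyndon u) (hsu : s <:+ u) (hM : ∀ w ∈ M, PLe u w)
    (hs : s ≠ []) (ht : t ≠ []) : ¬ t <+: M.flatten := by
  rintro ⟨b, htM⟩
  have hdrop : LetterLt M.flatten (s ++ t) :=
    htM ▸ (hv.letterLt_of_eq_append rfl hs ht).append_right b
  obtain ⟨w, hw, v', hv', hwv'⟩ := hdrop.exists_mem_of_flatten
  have hv'ne : v' ≠ [] := by
    obtain ⟨-, -, -, -, -, -, -, rfl⟩ := hwv'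
    simp
  have hvu : PLt (s ++ t) u := hu.plt_append_of_suffix hsu hs ht
  exact plt_irrefl w <| plt_trans hwv'.plt <| plt_of_ple_of_plt
    (hv.ple_of_suffix hv' hv'ne) (plt_of_plt_of_ple hvu (hM w hw))

theorem IsLyndon.exists_mem_infix_of_infix_flatten {L : List (List X)} {v : List X}
    (hL : ∀ w ∈ L, IsLyndon w) (hsorted : L.Pairwise PLe) (hv : IsLyndon v)
    (hvL : v <:+: L.flatten) : ∃ u ∈ L, v <:+: u := by
  induction L with
  | nil => exact absurd (List.infix_nil.1 hvL) hv.1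
  | cons u L ih =>
    rw [List.forall_mem_cons] at hL
    rw [List.pairwise_cons] at hsorted
    rw [List.flatten_cons, List.infix_append_iff_ne_nil] at hvL
    rcases hvL with hvu | hvL | ⟨s, t, hs, ht, rfl, hsu, htL⟩
    · exact ⟨u, List.mem_cons_self, hvu⟩
    · obtain ⟨w, hw, hvw⟩ := ih hL.2 hsorted.2 hvL
      exact ⟨w, List.mem_cons_of_mem u hw, hvw⟩
    · exact absurd htL (hv.not_prefix_flatten hL.1 hsu hsorted.1 hs ht)

end Lyndon

/-- If `u = u₁ ⋯ u_r` is a nondecreasing product of Lyndon words and `v` is a Lyndon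
factor of `u`, then `v` is a factor of some `u_i`. -/
theorem lyndon_factor_of_nondecreasing_product {X : Type*} [LinearOrder X]
    (L : List (List X)) (hL : ∀ w ∈ L, IsLyndon w) (hch : L.Chain' PLe)
    (v : List X) (hv : IsLyndon v) (hfac : ∃ a b : List X, L.flatten = a ++ v ++ b) :
    ∃ u ∈ L, ∃ a b : List X, u = a ++ v ++ b := by
  obtain ⟨a, b, hab⟩ := hfac
  obtain ⟨u, hu, a', b', hvu⟩ :=
    hv.exists_mem_infix_of_infix_flatten hL (List.IsChain.pairwise hch) ⟨a, b, hab.symm⟩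
  exact ⟨u, hu, a', b', hvu.symm⟩
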